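/- arXiv:1701.04120 — 9 statements merged into one kernel-verified Lean document; each statement's English description precedes it below -/
import Mathlib

section
/- Let k < n = q^t and let g_1,…,g_t ∈ F[x] be polynomials of degree at most n−k−1 such that rank_q{g_1(α*),…,g_t(α*)} = t, where α* ∈ F. Then for any two polynomials f, f' ∈ F[x] of degree at most k−1 satisfying Tr(g_i(α)·f(α)) = Tr(g_i(α)·f'(α)) for every α ∈ F∖{α*} and every i ∈ {1,…,t}, one has f(α*) = f'(α*). In other words, the value f(α*) of any codeword of the full-length Reed–Solomon code RS(F,k) is uniquely determined by the traces {Tr(g_i(α)f(α)) : α ∈ F∖{α*}, i ∈ {1,…,t}}. -/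
open Polynomial

/-!
Put `h = f - f'`, of degree `< k`. Each `gᵢ h` has degree `< |F| - 1`, so its values sum to zero
over `F` (the dual of a full-length Reed–Solomon code is again one). Taking traces, all terms with
`α ≠ α*` vanish by hypothesis, so `Tr(gᵢ(α*) h(α*)) = 0` for every `i`. The `gᵢ(α*)` span `F`
over `B` and the trace form is nondegenerate, hence `h(α*) = 0`.
-/

theorem FiniteField.sum_eval_eq_zero_of_natDegree_lt {F : Type*} [Field F] [Fintype F]
    {p : F[X]} (hp : p.natDegree < Fintype.card F - 1) : ∑ x : F, p.eval x = 0 := by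
  simp_rw [eval_eq_sum_range, Finset.sum_comm (γ := F), ← Finset.mul_sum]
  refine Finset.sum_eq_zero fun j hj => ?_
  rw [FiniteField.sum_pow_lt_card_sub_one F j (by grind), mul_zero]

theorem FiniteField.sum_eval_mul_eq_zero_of_degree_lt {F : Type*} [Field F] [Fintype F]
    {g h : F[X]} {k : ℕ} (hk : k < Fintype.card F)
    (hg : g.degree ≤ ((Fintype.card F - k - 1 : ℕ) : WithBot ℕ)) (hh : h.degree < k) :
    ∑ x : F, g.eval x * h.eval x = 0 := by
  rcases eq_or_ne h 0 with rfl | hh0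
  · simp
  simp_rw [← eval_mul]
  apply sum_eval_eq_zero_of_natDegree_lt
  have hg' := natDegree_le_of_degree_le hg
  have hh' := (natDegree_lt_iff_degree_lt hh0).mpr hh
  have := natDegree_mul_le (p := g) (q := h)
  omega

theorem eq_zero_of_trace_mul_eq_zero_of_span_eq_top {K L ι : Type*} [Field K] [Field L]
    [Algebra K L] [FiniteDimensional K L] [Algebra.IsSeparable K L] {v : ι → L}
    (hv : Submodule.span K (Set.range v) = ⊤) {z : L}
    (hz : ∀ i, Algebra.trace K L (v i * z) = 0) : z = 0 := by
  have hflip : (Algebra.traceForm K L).flip z = 0 :=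
    LinearMap.ext_on_range hv fun i => by simpa [Algebra.traceForm_apply] using hz i
  refine (traceForm_nondegenerate K L).2 z fun c => ?_
  simpa using LinearMap.congr_fun hflip c

theorem repair_determines_value_general
    (t k n : ℕ) (B F : Type*) [Field B] [Field F] [Fintype F]
    [Algebra B F]
    (ht : Module.finrank B F = t)
    (hcardF : Fintype.card F = n) (hk : k < n)
    (αstar : F) (g : Fin t → F[X])
    (hdeg : ∀ i, (g i).degree ≤ ((n - k - 1 : ℕ) : WithBot ℕ))
    (hrank : Module.finrank B
      (Submodule.span B (Set.range fun i => (g i).eval αstar)) = t)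
    (f f' : F[X]) (hf : f.degree < (k : WithBot ℕ)) (hf' : f'.degree < (k : WithBot ℕ))
    (htr : ∀ α : F, α ≠ αstar → ∀ i : Fin t,
      Algebra.trace B F ((g i).eval α * f.eval α)
        = Algebra.trace B F ((g i).eval α * f'.eval α)) :
    f.eval αstar = f'.eval αstar := by
  subst hcardF
  have hdiff : (f - f').degree < k := (degree_sub_le f f').trans_lt (max_lt hf hf')
  have htrace_at : ∀ i, Algebra.trace B F ((g i).eval αstar * (f - f').eval αstar) = 0 := by
    intro i
    calc Algebra.trace B F ((g i).eval αstar * (f - f').eval αstar)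
        = ∑ α, Algebra.trace B F ((g i).eval α * (f - f').eval α) := by
          rw [Finset.sum_eq_single_of_mem αstar (Finset.mem_univ _) fun α _ hα => ?_]
          rw [eval_sub, mul_sub, map_sub, htr α hα i, sub_self]
      _ = 0 := by
          rw [← map_sum, FiniteField.sum_eval_mul_eq_zero_of_degree_lt hk (hdeg i) hdiff, map_zero]
  have hspan : Submodule.span B (Set.range fun i => (g i).eval αstar) = ⊤ :=
    Submodule.eq_top_of_finrank_eq (hrank.trans ht.symm)
  simpa [sub_eq_zero] using eq_zero_of_trace_mul_eq_zero_of_span_eq_top hspan htrace_at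

/-- For the full-length Reed–Solomon code `RS(F, k)` over `F = GF(q^t)`
(with `k < n = q^t`), if `g₁, …, g_t` are polynomials of degree at most `n - k - 1` whose
values at `α*` have rank `t` over `B = GF(q)`, then the traces
`Tr(gᵢ(α) f(α))`, `α ∈ F \ {α*}`, `i ∈ [t]`, uniquely determine `f(α*)`. -/
theorem repair_determines_value
    (q t k n : ℕ) (B F : Type*) [Field B] [Fintype B] [Field F] [Fintype F]
    [Algebra B F]
    (hq : Fintype.card B = q) (ht : Module.finrank B F = t)
    (hn : n = q ^ t) (hcardF : Fintype.card F = n) (hk : k < n)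
    (αstar : F) (g : Fin t → F[X])
    (hdeg : ∀ i, (g i).degree ≤ ((n - k - 1 : ℕ) : WithBot ℕ))
    (hrank : Module.finrank B
      (Submodule.span B (Set.range fun i => (g i).eval αstar)) = t)
    (f f' : F[X]) (hf : f.degree < (k : WithBot ℕ)) (hf' : f'.degree < (k : WithBot ℕ))
    (htr : ∀ α : F, α ≠ αstar → ∀ i : Fin t,
      Algebra.trace B F ((g i).eval α * f.eval α)
        = Algebra.trace B F ((g i).eval α * f'.eval α)) :
    f.eval αstar = f'.eval αstar :=
  repair_determines_value_general t k n B F ht hcardF hk αstar g hdeg hrank f f' hf hf' htr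
end

section
/- Let A ⊆ F with |A| = n, let α* ∈ A, and let r ≥ 1 be an integer. Suppose g_1,…,g_t ∈ F[x] are polynomials of degree at most r−1 with rank_q{g_1(α*),…,g_t(α*)} = t. For each α ∈ A∖{α*} let b_α = rank_q{g_1(α),…,g_t(α)}. Then Σ_{α ∈ A∖{α*}} q^{−b_α} ≤ ((r−1)(q^t−1)+(n−1))/q^t. -/
/-!
For `c ∈ B^t` put `P_c = ∑ cᵢ gᵢ`. At each point `α` the coefficient vectors `c` with
`P_c(α) = 0` form the kernel of a linear map `B^t → F` of rank `b_α`, so there are exactly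
`q^(t - b_α)` of them. Counting the pairs `(α, c)` with `P_c(α) = 0` the other way round:
`c = 0` contributes `n - 1`, and each of the `q^t - 1` other vectors gives a nonzero polynomial
(the values `gᵢ(α*)` are independent) of degree at most `r - 1`, hence at most `r - 1` roots.
Dividing by `q^t` gives the inequality.
-/

open Polynomial Finset Module
open scoped Classical

theorem card_pow_finrank_span_mul_card_sum_smul_eq_zero {K V ι : Type*} [Field K] [Fintype K]
    [AddCommGroup V] [Module K V] [Fintype ι] [DecidableEq ι] (v : ι → V) :
    Fintype.card K ^ finrank K (Submodule.span K (Set.range v)) *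
      #{c : ι → K | ∑ i, c i • v i = 0} = Fintype.card K ^ Fintype.card ι := by
  set φ := Fintype.linearCombination K v
  have hker : #{c : ι → K | ∑ i, c i • v i = 0} = Fintype.card (LinearMap.ker φ) := by
    rw [← Fintype.card_subtype]; rfl
  rw [hker, ← Fintype.range_linearCombination,
    card_eq_pow_finrank (K := K) (V := LinearMap.ker φ), ← pow_add,
    φ.finrank_range_add_finrank_ker, finrank_fintype_fun_eq_card]

theorem card_filter_isRoot_le_natDegree {R : Type*} [CommRing R] [IsDomain R] {p : R[X]}
    (hp : p ≠ 0) (s : Finset R) : #{x ∈ s | p.IsRoot x} ≤ p.natDegree :=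
  card_le_degree_of_subset_roots fun x hx => by
    rw [mem_roots hp]; exact (mem_filter.1 hx).2

theorem sum_card_filter_comm {α β : Type*} [Fintype β] (s : Finset α) (r : α → β → Prop) :
    ∑ a ∈ s, #{b | r a b} = ∑ b, #{a ∈ s | r a b} := by
  simp_rw [card_filter]; exact sum_comm

theorem LinearIndependent.of_eval {K F ι : Type*} [Field K] [Field F] [Algebra K F]
    {g : ι → F[X]} (α : F) (h : LinearIndependent K fun i => (g i).eval α) :
    LinearIndependent K g :=
  h.of_comp ((leval α).restrictScalars K)

theorem card_filter_sum_smul_eval_eq_zero_le {K F ι : Type*} [Field K] [Field F] [Algebra K F]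
    [Fintype ι] {g : ι → F[X]} (hg : LinearIndependent K g)
    {d : ℕ} (hdeg : ∀ i, (g i).natDegree ≤ d) (s : Finset F) {c : ι → K} (hc : c ≠ 0) :
    #{α ∈ s | ∑ i, c i • (g i).eval α = 0} ≤ d := by
  set p := ∑ i, c i • g i
  have hp : p ≠ 0 := fun h => hc (funext (Fintype.linearIndependent_iff.1 hg c h))
  have hpdeg : p.natDegree ≤ d :=
    natDegree_sum_le_of_forall_le _ _ fun i _ => (natDegree_smul_le _ _).trans (hdeg i)
  have heval : ∀ α, p.eval α = ∑ i, c i • (g i).eval α := fun α => by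
    simp only [p, eval_finsetSum, eval_smul]
  simpa only [IsRoot, heval] using (card_filter_isRoot_le_natDegree hp s).trans hpdeg

theorem sum_card_sum_smul_eval_eq_zero_le {K F ι : Type*} [Field K] [Fintype K] [Field F]
    [Algebra K F] [Fintype ι] [DecidableEq ι] {g : ι → F[X]} (hg : LinearIndependent K g)
    {d : ℕ} (hdeg : ∀ i, (g i).natDegree ≤ d) (s : Finset F) :
    ∑ α ∈ s, #{c : ι → K | ∑ i, c i • (g i).eval α = 0}
      ≤ d * (Fintype.card K ^ Fintype.card ι - 1) + #s := by
  rw [sum_card_filter_comm, ← add_sum_erase _ _ (mem_univ 0), add_comm]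
  refine add_le_add ?_ (card_filter_le _ _)
  refine (sum_le_sum fun c hc =>
    card_filter_sum_smul_eval_eq_zero_le hg hdeg s (ne_of_mem_erase hc)).trans_eq ?_
  rw [sum_const, card_erase_of_mem (mem_univ _), card_univ, Fintype.card_fun, smul_eq_mul,
    mul_comm]

theorem feasibility_inequality_general
    (q t r n : ℕ) (B F : Type*) [Field B] [Fintype B] [Field F]
    [Algebra B F]
    (hq : Fintype.card B = q)
    (A : Finset F) (hn : A.card = n)
    (αstar : F) (hαstar : αstar ∈ A)
    (hr : 1 ≤ r)
    (g : Fin t → F[X])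
    (hdeg : ∀ i, (g i).degree ≤ ((r - 1 : ℕ) : WithBot ℕ))
    (hrank : Module.finrank B
      (Submodule.span B (Set.range fun i => (g i).eval αstar)) = t)
    (b : F → ℕ)
    (hb : ∀ α : F, b α = Module.finrank B
      (Submodule.span B (Set.range fun i => (g i).eval α))) :
    ∑ α ∈ A.erase αstar, ((q : ℝ) ^ (b α))⁻¹
      ≤ (((r : ℝ) - 1) * ((q : ℝ) ^ t - 1) + ((n : ℝ) - 1)) / (q : ℝ) ^ t := by
  subst hn
  have hind : LinearIndependent B g := .of_eval αstar
    (linearIndependent_iff_card_eq_finrank_span.2 (by simpa [Set.finrank] using hrank.symm))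
  have hcount := sum_card_sum_smul_eval_eq_zero_le hind
    (fun i => natDegree_le_iff_degree_le.2 (hdeg i)) (A.erase αstar)
  rw [Fintype.card_fin, card_erase_of_mem hαstar, hq] at hcount
  set N : F → ℕ := fun α => #{c : Fin t → B | ∑ i, c i • (g i).eval α = 0}
  have hq1 : 1 ≤ q := hq ▸ Fintype.card_pos
  have hqR : (0 : ℝ) < q := by exact_mod_cast hq1
  have hterm (α : F) : ((q : ℝ) ^ b α)⁻¹ = N α / (q : ℝ) ^ t := by
    have h := card_pow_finrank_span_mul_card_sum_smul_eq_zero (K := B) fun i => (g i).eval α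
    rw [← hb, Fintype.card_fin, hq] at h
    have hR : (q : ℝ) ^ b α * N α = (q : ℝ) ^ t := by exact_mod_cast h
    rw [eq_div_iff (pow_pos hqR t).ne', ← hR, inv_mul_cancel_left₀ (pow_pos hqR _).ne']
  rw [sum_congr rfl fun α _ => hterm α, ← sum_div]
  gcongr
  have hqt : 1 ≤ q ^ t := Nat.one_le_pow _ _ hq1
  have hA : 1 ≤ #A := card_pos.2 ⟨αstar, hαstar⟩
  exact_mod_cast hcount

/-- the feasibility inequality (5) in the proof of Proposition 1.
If `g₁, …, g_t` have degree at most `r - 1` and `rank_q {g₁(α*), …, g_t(α*)} = t`, then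
`Σ_{α ∈ A \ {α*}} q^{-b_α} ≤ ((r-1)(q^t - 1) + (n-1)) / q^t`. -/
theorem feasibility_inequality
    (q t r n : ℕ) (B F : Type*) [Field B] [Fintype B] [Field F] [Fintype F]
    [Algebra B F]
    (hq : Fintype.card B = q) (ht : Module.finrank B F = t)
    (A : Finset F) (hn : A.card = n)
    (αstar : F) (hαstar : αstar ∈ A)
    (hr : 1 ≤ r)
    (g : Fin t → F[X])
    (hdeg : ∀ i, (g i).degree ≤ ((r - 1 : ℕ) : WithBot ℕ))
    (hrank : Module.finrank B
      (Submodule.span B (Set.range fun i => (g i).eval αstar)) = t)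
    (b : F → ℕ)
    (hb : ∀ α : F, b α = Module.finrank B
      (Submodule.span B (Set.range fun i => (g i).eval α))) :
    ∑ α ∈ A.erase αstar, ((q : ℝ) ^ (b α))⁻¹
      ≤ (((r : ℝ) - 1) * ((q : ℝ) ^ t - 1) + ((n : ℝ) - 1)) / (q : ℝ) ^ t :=
  feasibility_inequality_general q t r n B F hq A hn αstar hαstar hr g hdeg hrank b hb
end

section
/- Let q ≥ 2 and t ≥ 1 be integers, n ≥ 2 an integer, and L a real number with 0 < L ≤ n−1. Let b_AVE = log_q((n−1)/L), and assume b_AVE ≤ t. Define ℓ = n−1 if b_AVE is an integer, and ℓ = ⌊(L − (n−1)q^{−⌈b_AVE⌉})/(q^{−⌊b_AVE⌋} − q^{−⌈b_AVE⌉})⌋ otherwise. Then every tuple (b_1,…,b_{n−1}) of integers with 0 ≤ b_i ≤ t for all i and Σ_{i=1}^{n−1} q^{−b_i} ≤ L satisfies Σ_{i=1}^{n−1} b_i ≥ ℓ·⌊b_AVE⌋ + (n−1−ℓ)·⌈b_AVE⌉. -/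
/-!
Since `x ↦ q ^ (-x)` is convex, at integer points it lies above the secant through `c - 1` and `c`
(integer Bernoulli inequality). Summing this over the tuple gives
`(N c - Σ bᵢ) (q^{-(c-1)} - q^{-c}) ≤ Σ q^{-bᵢ} - N q^{-c} ≤ L - N q^{-c}` with `N = n - 1`.
For non-integral `b_AVE` take `c = ⌈b_AVE⌉`; for integral `b_AVE = B` take `c = B + 1` and use
`L = N q^{-B}`.
-/

open Finset

section Bernoulli

variable {K : Type*} [Field K] [LinearOrder K] [IsStrictOrderedRing K]

theorem one_add_mul_sub_le_zpow {a : K} (ha : 0 < a) (n : ℤ) : 1 + n * (a - 1) ≤ a ^ n := by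
  obtain ⟨k, rfl | rfl⟩ := n.eq_nat_or_neg
  · simpa using one_add_mul_sub_le_pow (by linarith : -1 ≤ a) k
  · -- `1 - a ≤ a⁻¹ - 1` by AM-GM, so Bernoulli for `a⁻¹` gives the bound
    have hinv : 1 - a ≤ a⁻¹ - 1 := by
      have : a⁻¹ - 1 - (1 - a) = (a - 1) ^ 2 * a⁻¹ := by field_simp; ring
      nlinarith [mul_nonneg (sq_nonneg (a - 1)) (inv_nonneg.mpr ha.le)]
    calc 1 + ((-k : ℤ) : K) * (a - 1) = 1 + k * (1 - a) := by push_cast; ring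
      _ ≤ 1 + k * (a⁻¹ - 1) := by gcongr
      _ ≤ a⁻¹ ^ k := one_add_mul_sub_le_pow (by linarith [inv_pos.mpr ha]) k
      _ = a ^ (-k : ℤ) := by rw [zpow_neg, zpow_natCast, inv_pow]

theorem zpow_neg_add_mul_sub_le_zpow_neg {a : K} (ha : 0 < a) (b c : ℤ) :
    a ^ (-c) + (c - b) * (a ^ (-(c - 1)) - a ^ (-c)) ≤ a ^ (-b) := by
  have hsplit : a ^ (-b) = a ^ (-c) * a ^ (c - b) := by rw [← zpow_add₀ ha.ne']; ring_nf
  have hstep : a ^ (-(c - 1)) = a ^ (-c) * a := by rw [← zpow_add_one₀ ha.ne']; ring_nf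
  calc a ^ (-c) + (c - b) * (a ^ (-(c - 1)) - a ^ (-c))
      = a ^ (-c) * (1 + ((c - b : ℤ) : K) * (a - 1)) := by rw [hstep]; push_cast; ring
    _ ≤ a ^ (-c) * a ^ (c - b) := by gcongr; exact one_add_mul_sub_le_zpow ha _
    _ = a ^ (-b) := hsplit.symm

theorem card_mul_sub_sum_mul_le {ι : Type*} (s : Finset ι) {a : K} (ha : 0 < a) (b : ι → ℤ)
    (c : ℤ) :
    (#s * c - ∑ i ∈ s, (b i : K)) * (a ^ (-(c - 1)) - a ^ (-c))
      ≤ ∑ i ∈ s, a ^ (-b i) - #s * a ^ (-c) := by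
  have := sum_le_sum fun i (_ : i ∈ s) => zpow_neg_add_mul_sub_le_zpow_neg ha (b i) c
  rw [sum_add_distrib, ← sum_mul, sum_sub_distrib] at this
  simp only [sum_const, nsmul_eq_mul] at this
  linarith

theorem zpow_neg_pred_sub_zpow_neg_pos {a : K} (ha : 1 < a) (c : ℤ) :
    0 < a ^ (-(c - 1)) - a ^ (-c) :=
  sub_pos.mpr (zpow_lt_zpow_right₀ ha (by omega))

theorem card_mul_sub_sum_le_floor [FloorRing K] {ι : Type*} (s : Finset ι) {a L : K} (ha : 1 < a)
    (b : ι → ℤ) (c : ℤ) (hsum : ∑ i ∈ s, a ^ (-b i) ≤ L) :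
    #s * c - ∑ i ∈ s, b i ≤ ⌊(L - #s * a ^ (-c)) / (a ^ (-(c - 1)) - a ^ (-c))⌋ := by
  rw [Int.le_floor, le_div_iff₀ (zpow_neg_pred_sub_zpow_neg_pos ha c)]
  push_cast
  linarith [card_mul_sub_sum_mul_le s (zero_lt_one.trans ha) b c]

theorem card_mul_le_sum {ι : Type*} (s : Finset ι) {a L : K} (ha : 1 < a) (b : ι → ℤ) (B : ℤ)
    (hL : L ≤ #s * a ^ (-B)) (hsum : ∑ i ∈ s, a ^ (-b i) ≤ L) :
    #s * B ≤ ∑ i ∈ s, b i := by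
  have hD := zpow_neg_pred_sub_zpow_neg_pos ha (B + 1)
  have h := card_mul_sub_sum_mul_le s (zero_lt_one.trans ha) b (B + 1)
  rw [add_sub_cancel_right] at h hD
  push_cast at h
  have : (#s * (B + 1) - ∑ i ∈ s, (b i : K)) ≤ #s := le_of_mul_le_mul_right (by linarith) hD
  exact_mod_cast (by linarith : (#s * B : K) ≤ ∑ i ∈ s, (b i : K))

end Bernoulli

theorem integral_lower_bound_general
    (q n : ℕ) (hq : 2 ≤ q) (hn : 2 ≤ n)
    (L : ℝ) (hL0 : 0 < L)
    (bAVE : ℝ) (hbAVE : bAVE = Real.logb q (((n : ℝ) - 1) / L))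
    (ℓ : ℤ)
    (hℓ_int : (∃ m : ℤ, bAVE = (m : ℝ)) → ℓ = (n : ℤ) - 1)
    (hℓ_nonint : (¬ ∃ m : ℤ, bAVE = (m : ℝ)) →
      ℓ = ⌊(L - ((n : ℝ) - 1) * (q : ℝ) ^ (-(⌈bAVE⌉ : ℤ)))
            / ((q : ℝ) ^ (-(⌊bAVE⌋ : ℤ)) - (q : ℝ) ^ (-(⌈bAVE⌉ : ℤ)))⌋)
    (b : Fin (n - 1) → ℕ)
    (hsum : ∑ i, ((q : ℝ) ^ (b i))⁻¹ ≤ L) :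
    ℓ * ⌊bAVE⌋ + ((n : ℤ) - 1 - ℓ) * ⌈bAVE⌉ ≤ ∑ i, (b i : ℤ) := by
  have hq1 : (1 : ℝ) < q := by exact_mod_cast hq
  have hcard : (#(univ : Finset (Fin (n - 1))) : ℝ) = n - 1 := by
    simp [Nat.cast_sub (by omega : 1 ≤ n)]
  have hcardℤ : (#(univ : Finset (Fin (n - 1))) : ℤ) = n - 1 := by simp; omega
  have hsum' : ∑ i, (q : ℝ) ^ (-(b i : ℤ)) ≤ L := by simpa only [zpow_neg, zpow_natCast] using hsum
  by_cases hint : ∃ m : ℤ, bAVE = m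
  · obtain ⟨B, hB⟩ := hint
    have hL : L ≤ #(univ : Finset (Fin (n - 1))) * (q : ℝ) ^ (-B) := by
      have hpos : 0 < ((n : ℝ) - 1) / L := div_pos (by norm_num; omega) hL0
      have := (Real.le_logb_iff_rpow_le hq1 hpos).mp (hB ▸ hbAVE).le
      rw [Real.rpow_intCast, le_div_iff₀ hL0] at this
      rw [hcard, zpow_neg, ← div_eq_mul_inv, le_div_iff₀ (by positivity)]
      linarith
    have hB_le := card_mul_le_sum univ hq1 (fun i => (b i : ℤ)) B hL hsum'
    rw [hcardℤ] at hB_le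
    rw [hℓ_int ⟨B, hB⟩, hB, Int.floor_intCast, Int.ceil_intCast]
    linarith
  · have hfloor : ⌊bAVE⌋ = ⌈bAVE⌉ - 1 := by
      have := (Int.ceil_eq_floor_add_one_iff_notMem bAVE).mpr fun ⟨m, hm⟩ => hint ⟨m, hm.symm⟩
      omega
    have hℓ_le := card_mul_sub_sum_le_floor univ hq1 (fun i => (b i : ℤ)) ⌈bAVE⌉ hsum'
    rw [hcard, hcardℤ, ← hfloor, ← hℓ_nonint hint] at hℓ_le
    rw [hfloor]
    linarith

/-- the integral optimization step in the proof of Proposition 1.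
Let `q ≥ 2`, `t ≥ 1`, `n ≥ 2`, `0 < L ≤ n - 1`, `b_AVE = log_q((n-1)/L) ≤ t`, and let
`ℓ = n - 1` if `b_AVE ∈ ℤ` and
`ℓ = ⌊(L - (n-1) q^{-⌈b_AVE⌉}) / (q^{-⌊b_AVE⌋} - q^{-⌈b_AVE⌉})⌋` otherwise.
Then every integer tuple `(b₁, …, b_{n-1})` with `0 ≤ bᵢ ≤ t` and `Σᵢ q^{-bᵢ} ≤ L`
satisfies `Σᵢ bᵢ ≥ ℓ ⌊b_AVE⌋ + (n - 1 - ℓ) ⌈b_AVE⌉`. -/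
theorem integral_lower_bound
    (q t n : ℕ) (hq : 2 ≤ q) (ht : 1 ≤ t) (hn : 2 ≤ n)
    (L : ℝ) (hL0 : 0 < L) (hL1 : L ≤ (n : ℝ) - 1)
    (bAVE : ℝ) (hbAVE : bAVE = Real.logb q (((n : ℝ) - 1) / L))
    (hbAVEt : bAVE ≤ (t : ℝ))
    (ℓ : ℤ)
    (hℓ_int : (∃ m : ℤ, bAVE = (m : ℝ)) → ℓ = (n : ℤ) - 1)
    (hℓ_nonint : (¬ ∃ m : ℤ, bAVE = (m : ℝ)) →
      ℓ = ⌊(L - ((n : ℝ) - 1) * (q : ℝ) ^ (-(⌈bAVE⌉ : ℤ)))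
            / ((q : ℝ) ^ (-(⌊bAVE⌋ : ℤ)) - (q : ℝ) ^ (-(⌈bAVE⌉ : ℤ)))⌋)
    (b : Fin (n - 1) → ℕ) (hb : ∀ i, b i ≤ t)
    (hsum : ∑ i, ((q : ℝ) ^ (b i))⁻¹ ≤ L) :
    ℓ * ⌊bAVE⌋ + ((n : ℤ) - 1 - ℓ) * ⌈bAVE⌉ ≤ ∑ i, (b i : ℤ) :=
  integral_lower_bound_general q n hq hn L hL0 bAVE hbAVE ℓ hℓ_int hℓ_nonint b hsum
end

section
/- Let 1 ≤ s ≤ t, let α* ∈ F, and suppose g_1,…,g_t ∈ F[x] are polynomials of degree at most q^s − 1 with rank_q{g_1(α*),…,g_t(α*)} = t. Then Σ_{α ∈ F∖{α*}} rank_q{g_1(α),…,g_t(α)} ≥ (q^t − 1)(t − s). -/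
open Polynomial
open scoped Classical

/-!
Write `ev_α c = Σ cᵢ gᵢ(α)` for `c ∈ Bᵗ`, so that `rank_q {gᵢ(α)} = t - dim ker ev_α`.
Independence at `α*` makes every `c ≠ 0` give a nonzero polynomial `Σ cᵢ gᵢ` of degree
`< q^s`, which vanishes at fewer than `q^s` points. Counting the pairs `(c, α)` with `c ≠ 0`,
`α ≠ α*` and `ev_α c = 0` then gives `Σ_α q^{dim ker ev_α} ≤ (q^t - 1) q^s`, and convexity
of `x ↦ q^x` (its tangent line at `s`) turns this into `Σ_α dim ker ev_α ≤ (q^t - 1) s`.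
-/

section
open Finset

theorem sum_natCard_ker_le {K V W X : Type*} [Semiring K] [AddCommMonoid V] [Fintype V]
    [AddCommMonoid W] [Module K V] [Module K W] (S : Finset X) (φ : X → V →ₗ[K] W) {m : ℕ}
    (h : ∀ v ≠ 0, #{x ∈ S | φ x v = 0} ≤ m) :
    ∑ x ∈ S, Nat.card (LinearMap.ker (φ x)) ≤ #S + (Fintype.card V - 1) * m := by
  have hker (x : X) : Nat.card (LinearMap.ker (φ x)) = #{v | φ x v = 0} := by
    rw [Nat.card_eq_fintype_card, Fintype.card_subtype]; rfl
  calc ∑ x ∈ S, Nat.card (LinearMap.ker (φ x))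
      = ∑ v, #{x ∈ S | φ x v = 0} := by
        simp only [hker, card_filter]; exact sum_comm
    _ = #S + ∑ v ∈ univ.erase 0, #{x ∈ S | φ x v = 0} := by
        rw [← add_sum_erase _ _ (mem_univ 0)]; simp
    _ ≤ #S + (Fintype.card V - 1) * m := by
        gcongr
        refine (sum_le_card_nsmul _ _ m fun v hv => h v (ne_of_mem_erase hv)).trans_eq ?_
        rw [card_erase_of_mem (mem_univ 0), card_univ, smul_eq_mul]

theorem pow_mul_one_add_log_le {x : ℝ} (hx : 0 < x) (s k : ℕ) :
    x ^ s * (1 + (k - s) * Real.log x) ≤ x ^ k := by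
  have hexp (n : ℕ) : x ^ n = Real.exp (n * Real.log x) := by
    rw [Real.exp_nat_mul, Real.exp_log hx]
  calc x ^ s * (1 + (k - s) * Real.log x)
      ≤ x ^ s * Real.exp ((k - s) * Real.log x) := by
        gcongr; linarith [Real.add_one_le_exp ((k - s) * Real.log x)]
    _ = x ^ k := by rw [hexp, hexp, ← Real.exp_add]; ring_nf

theorem sum_le_card_mul_of_sum_pow_le {X : Type*} {q s : ℕ} (hq : 1 < q) (S : Finset X)
    (k : X → ℕ) (h : ∑ x ∈ S, q ^ k x ≤ #S * q ^ s) : ∑ x ∈ S, k x ≤ #S * s := by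
  have hlog : 0 < Real.log q := Real.log_pos (by exact_mod_cast hq)
  have hqs : (0 : ℝ) < q ^ s := by positivity
  have htangent : ∑ x ∈ S, (q : ℝ) ^ s * (1 + (k x - s) * Real.log q) ≤ #S * (q : ℝ) ^ s :=
    (sum_le_sum fun x _ => pow_mul_one_add_log_le (by positivity) s (k x)).trans
      (by exact_mod_cast h)
  have hsum : ∑ x ∈ S, (q : ℝ) ^ s * (1 + (k x - s) * Real.log q)
      = #S * (q : ℝ) ^ s + (q : ℝ) ^ s * Real.log q * (∑ x ∈ S, (k x : ℝ) - #S * s) := by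
    simp only [mul_add, mul_one, sum_add_distrib, sum_const, nsmul_eq_mul, ← mul_sum, sub_mul,
      sum_sub_distrib, ← sum_mul]
    ring
  have : (∑ x ∈ S, k x : ℝ) ≤ #S * s := by
    rw [hsum] at htangent
    nlinarith [mul_pos hqs hlog]
  exact_mod_cast this

theorem sum_finrank_ker_le_card_mul {K V W X : Type*} [Field K] [Fintype K] [AddCommGroup V]
    [Module K V] [Fintype V] [AddCommGroup W] [Module K W] (S : Finset X) (φ : X → V →ₗ[K] W)
    {s : ℕ} (hV : Fintype.card V ≤ #S + 1)
    (h : ∀ v ≠ 0, #{x ∈ S | φ x v = 0} < Fintype.card K ^ s) :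
    ∑ x ∈ S, Module.finrank K (LinearMap.ker (φ x)) ≤ #S * s := by
  have hK : 1 ≤ Fintype.card K ^ s := Nat.one_le_pow _ _ Fintype.card_pos
  refine sum_le_card_mul_of_sum_pow_le (Fintype.one_lt_card (α := K)) S _ ?_
  calc ∑ x ∈ S, Fintype.card K ^ Module.finrank K (LinearMap.ker (φ x))
      = ∑ x ∈ S, Nat.card (LinearMap.ker (φ x)) := by
        refine sum_congr rfl fun x _ => ?_
        rw [Module.natCard_eq_pow_finrank (K := K), Nat.card_eq_fintype_card]
    _ ≤ #S + (Fintype.card V - 1) * (Fintype.card K ^ s - 1) :=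
        sum_natCard_ker_le S φ fun v hv => Nat.le_sub_one_of_lt (h v hv)
    _ ≤ #S + #S * (Fintype.card K ^ s - 1) := by gcongr; omega
    _ = #S * Fintype.card K ^ s := by
        rw [add_comm, ← mul_add_one, Nat.sub_add_cancel hK]

theorem finrank_span_add_finrank_ker_linearCombination {K V ι : Type*} [DivisionRing K]
    [AddCommGroup V] [Module K V] [Fintype ι] (v : ι → V) :
    Module.finrank K (Submodule.span K (Set.range v))
      + Module.finrank K (LinearMap.ker (Fintype.linearCombination K v)) = Fintype.card ι := by
  rw [← Fintype.range_linearCombination, LinearMap.finrank_range_add_finrank_ker,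
    Module.finrank_fintype_fun_eq_card]

theorem card_filter_eval_eq_zero_le {R : Type*} [CommRing R] [IsDomain R] (S : Finset R)
    {p : R[X]} (hp : p ≠ 0) : #{x ∈ S | p.eval x = 0} ≤ p.natDegree := by
  refine card_le_degree_of_subset_roots fun x hx => ?_
  rw [Finset.mem_val, Finset.mem_filter] at hx
  exact (mem_roots hp).2 hx.2

section LinearCombination

variable {B F ι : Type*} [CommSemiring B] [Field F] [Algebra B F] [Fintype ι] (g : ι → F[X])

theorem linearCombination_eval (α : F) (c : ι → B) :
    Fintype.linearCombination B (fun i => (g i).eval α) c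
      = (Fintype.linearCombination B g c).eval α := by
  simp [Fintype.linearCombination_apply, eval_finsetSum]

theorem degree_linearCombination_le {n : WithBot ℕ} (hg : ∀ i, (g i).degree ≤ n) (c : ι → B) :
    (Fintype.linearCombination B g c).degree ≤ n := by
  rw [Fintype.linearCombination_apply, ← mem_degreeLE]
  exact Submodule.sum_mem _ fun i _ => Submodule.smul_of_tower_mem _ _ (mem_degreeLE.2 (hg i))

theorem card_filter_linearCombination_eval_eq_zero_le {n : ℕ} (hg : ∀ i, (g i).degree ≤ n)
    {α₀ : F} (hα₀ : LinearIndependent B fun i => (g i).eval α₀) {c : ι → B} (hc : c ≠ 0)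
    (S : Finset F) :
    #{α ∈ S | Fintype.linearCombination B (fun i => (g i).eval α) c = 0} ≤ n := by
  have hp : (Fintype.linearCombination B g c).eval α₀ ≠ 0 := by
    rw [← linearCombination_eval]
    exact (map_ne_zero_iff _ hα₀.fintypeLinearCombination_injective).2 hc
  simp only [linearCombination_eval]
  exact (card_filter_eval_eq_zero_le S fun h => hp (by simp [h])).trans
    (natDegree_le_iff_degree_le.2 (degree_linearCombination_le g hg c))

end LinearCombination

end

theorem full_length_lower_bound_general
    (q t s : ℕ) (B F : Type*) [Field B] [Fintype B] [Field F] [Fintype F]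
    [Algebra B F]
    (hq : Fintype.card B = q) (ht : Module.finrank B F = t)
    (αstar : F)
    (g : Fin t → F[X])
    (hdeg : ∀ i, (g i).degree ≤ ((q ^ s - 1 : ℕ) : WithBot ℕ))
    (hrank : Module.finrank B
      (Submodule.span B (Set.range fun i => (g i).eval αstar)) = t) :
    (q ^ t - 1) * (t - s)
      ≤ ∑ α ∈ Finset.univ.erase αstar,
          Module.finrank B (Submodule.span B (Set.range fun i => (g i).eval α)) := by
  set N := (Finset.univ : Finset F).erase αstar
  have hN : N.card + 1 = q ^ t := by
    rw [Finset.card_erase_add_one (Finset.mem_univ _), Finset.card_univ, ← hq, ← ht]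
    exact Module.card_eq_pow_finrank
  have hindep : LinearIndependent B fun i => (g i).eval αstar := by
    rw [linearIndependent_iff_card_eq_finrank_span, Set.finrank, hrank, Fintype.card_fin]
  let ev (α : F) := Fintype.linearCombination B fun i => (g i).eval α
  have hker : ∑ α ∈ N, Module.finrank B (LinearMap.ker (ev α)) ≤ N.card * s := by
    refine sum_finrank_ker_le_card_mul N ev (by simp [hq, hN]) fun c hc => ?_
    have hqs : 0 < q ^ s := pow_pos (hq ▸ Fintype.card_pos) s
    rw [hq]
    exact (card_filter_linearCombination_eval_eq_zero_le g hdeg hindep hc N).trans_lt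
      (Nat.sub_lt hqs Nat.one_pos)
  have hsum : ∑ α ∈ N, Module.finrank B (Submodule.span B (Set.range fun i => (g i).eval α))
      + ∑ α ∈ N, Module.finrank B (LinearMap.ker (ev α)) = N.card * t := by
    rw [← Finset.sum_add_distrib, Finset.sum_const_nat fun α _ => by
      simpa using finrank_span_add_finrank_ker_linearCombination (K := B) fun i => (g i).eval α]
  rw [show q ^ t - 1 = N.card by omega, Nat.mul_sub]
  omega

/-- Corollary 1. Any linear repair scheme over `B = GF(q)` for a
full-length (`n = q^t`) Reed–Solomon code with `r = q^s` parities requires a bandwidth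
of at least `(q^t - 1)(t - s)` sub-symbols: if `g₁, …, g_t` have degree at most `q^s - 1`
and `rank_q {g₁(α*), …, g_t(α*)} = t`, then
`Σ_{α ∈ F \ {α*}} rank_q {g₁(α), …, g_t(α)} ≥ (q^t - 1)(t - s)`. -/
theorem full_length_lower_bound
    (q t s : ℕ) (B F : Type*) [Field B] [Fintype B] [Field F] [Fintype F]
    [Algebra B F]
    (hq : Fintype.card B = q) (ht : Module.finrank B F = t)
    (hs1 : 1 ≤ s) (hst : s ≤ t)
    (αstar : F)
    (g : Fin t → F[X])
    (hdeg : ∀ i, (g i).degree ≤ ((q ^ s - 1 : ℕ) : WithBot ℕ))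
    (hrank : Module.finrank B
      (Submodule.span B (Set.range fun i => (g i).eval αstar)) = t) :
    (q ^ t - 1) * (t - s)
      ≤ ∑ α ∈ Finset.univ.erase αstar,
          Module.finrank B (Submodule.span B (Set.range fun i => (g i).eval α)) :=
  full_length_lower_bound_general q t s B F hq ht αstar g hdeg hrank
end

section
/- With g_1,…,g_t chosen according to Construction I, for every α ∈ F∖{α*} the set {g_1(α),…,g_t(α)} is linearly dependent over 𝔽₂; that is, rank₂{g_1(α),…,g_t(α)} ≤ t − 1. -/
/-!
Over `𝔽₂` squaring is linear, so `gᵢ(α) = (α - α*) βᵢ + βᵢ²` is the image of the basis vector `βᵢ`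
under the `𝔽₂`-linear map `L x = (α - α*) x + x²`. Its kernel contains `α* - α ≠ 0`, so the values
`gᵢ(α)` span the proper subspace `range L` of `F`.
-/

open Polynomial

theorem finrank_span_range_comp_basis_lt {K V W ι : Type*} [DivisionRing K] [AddCommGroup V]
    [Module K V] [AddCommGroup W] [Module K W] [Fintype ι] (f : V →ₗ[K] W)
    (b : Module.Basis ι K V) (hf : LinearMap.ker f ≠ ⊥) :
    Module.finrank K (Submodule.span K (Set.range (f ∘ b))) < Fintype.card ι := by
  have : FiniteDimensional K V := Module.Finite.of_basis b
  have hspan : Submodule.span K (Set.range (f ∘ b)) = LinearMap.range f := by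
    rw [Set.range_comp, Submodule.span_image, b.span_eq, LinearMap.range_eq_map]
  have hker : 0 < Module.finrank K (LinearMap.ker f) :=
    Module.finrank_pos_iff.mpr (Submodule.nontrivial_iff_ne_bot.mpr hf)
  have := f.finrank_range_add_finrank_ker
  rw [hspan, ← Module.finrank_eq_card_basis b]
  omega

theorem eval_C_mul_X_sub_C_sub {R : Type*} [CommRing R] (a b x : R) :
    (C b * (X - C (a - b))).eval x = (x - a) * b + b ^ 2 := by
  simp only [eval_mul, eval_C, eval_sub, eval_X]
  ring

theorem constructionI_rank_at_available_general
    (t : ℕ) (B F : Type*) [Field B] [Fintype B] [Field F]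
    [Algebra B F]
    (hB : Fintype.card B = 2)
    (αstar : F) (β : Module.Basis (Fin t) B F)
    (g : Fin t → F[X])
    (hg : ∀ i, g i = C (β i) * (X - C (αstar - β i)))
    (α : F) (hα : α ≠ αstar) :
    ¬ LinearIndependent B (fun i : Fin t => (g i).eval α) ∧
    Module.finrank B
      (Submodule.span B (Set.range fun i => (g i).eval α)) ≤ t - 1 := by
  let L : F →ₗ[B] F :=
    LinearMap.mulLeft B (α - αstar) + (FiniteField.frobeniusAlgHom B F).toLinearMap
  have hL : ∀ x, L x = (α - αstar) * x + x ^ 2 := fun x => by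
    simp [L, hB]
  have hgL : (fun i => (g i).eval α) = L ∘ β := funext fun i => by
    rw [hg, eval_C_mul_X_sub_C_sub, Function.comp_apply, hL]
  have hker : LinearMap.ker L ≠ ⊥ := by
    refine (Submodule.ne_bot_iff _).mpr ⟨αstar - α, ?_, sub_ne_zero.mpr hα.symm⟩
    rw [LinearMap.mem_ker, hL]
    ring
  have hlt := finrank_span_range_comp_basis_lt L β hker
  rw [Fintype.card_fin, ← hgL] at hlt
  refine ⟨fun hli => ?_, by omega⟩
  rw [finrank_span_eq_card hli, Fintype.card_fin] at hlt
  exact hlt.false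

/-- Lemma 3. With `g₁, …, g_t` chosen according to Construction I
(`gᵢ(x) = βᵢ(x - (α* - βᵢ))` for an `𝔽₂`-basis `β₁, …, β_t` of `F = GF(2^t)`),
for every `α ∈ F \ {α*}` the set `{g₁(α), …, g_t(α)}` is linearly dependent over `𝔽₂`,
i.e. `rank₂ {g₁(α), …, g_t(α)} ≤ t - 1`. -/
theorem constructionI_rank_at_available
    (t : ℕ) (B F : Type*) [Field B] [Fintype B] [Field F] [Fintype F]
    [Algebra B F]
    (hB : Fintype.card B = 2) (ht : Module.finrank B F = t)
    (αstar : F) (β : Module.Basis (Fin t) B F)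
    (g : Fin t → F[X])
    (hg : ∀ i, g i = C (β i) * (X - C (αstar - β i)))
    (α : F) (hα : α ≠ αstar) :
    ¬ LinearIndependent B (fun i : Fin t => (g i).eval α) ∧
    Module.finrank B
      (Submodule.span B (Set.range fun i => (g i).eval α)) ≤ t - 1 :=
  constructionI_rank_at_available_general t B F hB αstar β g hg α hα
end

section
/- Let n = 2^t and k ≤ n − 2, and let g_1,…,g_t be chosen according to Construction I. Then: (i) for any two polynomials f, f' ∈ F[x] of degree at most k−1 satisfying Tr(g_i(α)·f(α)) = Tr(g_i(α)·f'(α)) for every α ∈ F∖{α*} and every i ∈ {1,…,t}, one has f(α*) = f'(α*) — so the g_i can be used to repair the codeword symbol f(α*) of the full-length Reed–Solomon code RS(F,k); and (ii) Σ_{α ∈ F∖{α*}} rank₂{g_1(α),…,g_t(α)} ≤ (n−1)(t−1), i.e., the repair bandwidth is at most (n−1)(t−1) bits. -/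
/-!
(i) For `d = f - f'` every `gᵢ d` has degree `< |F| - 1`, so its values over `F` sum to zero and
`Tr(gᵢ(α*) d(α*))` is minus the sum of the traces at the other points, which all vanish. As
`gᵢ(α*) = βᵢ²` and the Frobenius maps a basis to a basis, nondegeneracy of the trace form forces
`d(α*) = 0`.

(ii) For `α ≠ α*` put `y = βᵢ / (α - α*)`; then `gᵢ(α) / (α - α*)² = y + y²` has trace `2 Tr y = 0`.
So all `gᵢ(α)` lie in the kernel of the nonzero functional `x ↦ Tr(x / (α - α*)²)`, a hyperplane.
-/

open Polynomial
open scoped Classical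

namespace FiniteField

variable {K F : Type*} [Field K] [Fintype K] [Field F] [Fintype F]

theorem sum_eval_eq_zero {p : F[X]} (hp : p.degree < ↑(Fintype.card F - 1)) :
    ∑ x : F, p.eval x = 0 := by
  simp only [eval_eq_sum, sum_def]
  rw [Finset.sum_comm]
  refine Finset.sum_eq_zero fun n hn => ?_
  rw [← Finset.mul_sum, sum_pow_lt_card_sub_one (K := F) n ?_, mul_zero]
  exact_mod_cast (le_degree_of_mem_supp n hn).trans_lt hp

variable [Algebra K F]

variable (K) in
theorem trace_pow_card_eq_trace (x : F) :
    Algebra.trace K F (x ^ Fintype.card K) = Algebra.trace K F x :=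
  Algebra.trace_eq_of_algEquiv (frobeniusAlgEquivOfAlgebraic K F) x

theorem span_range_pow_card {ι : Type*} (b : Module.Basis ι K F) :
    Submodule.span K (Set.range fun i => b i ^ Fintype.card K) = ⊤ :=
  (b.map (frobeniusAlgEquivOfAlgebraic K F).toLinearEquiv).span_eq

theorem eq_zero_of_trace_mul_eq_zero {ι : Type*} {v : ι → F}
    (hv : Submodule.span K (Set.range v) = ⊤) {e : F}
    (he : ∀ i, Algebra.trace K F (v i * e) = 0) : e = 0 := by
  have hzero : Algebra.traceForm K F e = 0 :=
    LinearMap.ext_on_range hv fun i => by simpa [mul_comm] using he i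
  exact (traceForm_nondegenerate K F).1 e fun y => by simp [hzero]

theorem finrank_span_lt_of_trace_mul_eq_zero {c : F} (hc : c ≠ 0) {S : Set F}
    (hS : ∀ s ∈ S, Algebra.trace K F (c * s) = 0) :
    Module.finrank K (Submodule.span K S) < Module.finrank K F := by
  refine Submodule.finrank_lt fun htop => hc <| (traceForm_nondegenerate K F).1 c fun y => ?_
  have hker : Submodule.span K S ≤ LinearMap.ker (Algebra.traceForm K F c) :=
    Submodule.span_le.mpr hS
  exact hker (htop ▸ Submodule.mem_top)

theorem eval_eq_zero_of_trace_eval_mul_eq_zero {ι : Type*} (g : ι → F[X]) {d : F[X]} {a : F}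
    (hspan : Submodule.span K (Set.range fun i => (g i).eval a) = ⊤)
    (hdeg : ∀ i, (g i * d).degree < ↑(Fintype.card F - 1))
    (htr : ∀ x ≠ a, ∀ i, Algebra.trace K F ((g i).eval x * d.eval x) = 0) :
    d.eval a = 0 := by
  refine eq_zero_of_trace_mul_eq_zero hspan fun i => ?_
  have hsum := congrArg (Algebra.trace K F) (sum_eval_eq_zero (hdeg i))
  rw [map_sum, map_zero, ← Finset.add_sum_erase _ _ (Finset.mem_univ a),
    Finset.sum_eq_zero fun x hx => ?_, add_zero] at hsum
  · simpa only [Finset.mem_univ, Finset.sum_erase_eq_sub, eval_mul] using hsum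
  · simpa using htr x (Finset.ne_of_mem_erase hx) i

end FiniteField

section ConstructionI

variable {K F : Type*} [Field K] [Fintype K] [Field F]

noncomputable def constructionIPoly (a b : F) : F[X] := C b * (X - C (a - b))

theorem eval_constructionIPoly (a b x : F) : (constructionIPoly a b).eval x = b * (x - a + b) := by
  simp only [constructionIPoly, eval_mul, eval_C, eval_sub, eval_X]
  ring

theorem degree_constructionIPoly_le (a b : F) : (constructionIPoly a b).degree ≤ 1 := by
  unfold constructionIPoly
  compute_degree

variable [Fintype F] [Algebra K F]

theorem span_eval_constructionIPoly_self (hK : Fintype.card K = 2) {ι : Type*}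
    (β : Module.Basis ι K F) (a : F) :
    Submodule.span K (Set.range fun i => (constructionIPoly a (β i)).eval a) = ⊤ := by
  simpa [eval_constructionIPoly, hK, sq] using FiniteField.span_range_pow_card β

theorem trace_mul_eval_constructionIPoly (hK : Fintype.card K = 2) {a x : F} (hx : x ≠ a)
    (b : F) : Algebra.trace K F ((x - a)⁻¹ ^ 2 * (constructionIPoly a b).eval x) = 0 := by
  have hy : (x - a)⁻¹ ^ 2 * (constructionIPoly a b).eval x
      = b * (x - a)⁻¹ + (b * (x - a)⁻¹) ^ Fintype.card K := by
    rw [eval_constructionIPoly, hK]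
    field_simp [sub_ne_zero.mpr hx]
  have h2 : (2 : K) = 0 := by exact_mod_cast hK ▸ FiniteField.cast_card_eq_zero K
  rw [hy, map_add, FiniteField.trace_pow_card_eq_trace, ← two_smul K, h2, zero_smul]

theorem finrank_span_eval_constructionIPoly_lt (hK : Fintype.card K = 2) {ι : Type*}
    (b : ι → F) {a x : F} (hx : x ≠ a) :
    Module.finrank K (Submodule.span K (Set.range fun i => (constructionIPoly a (b i)).eval x))
      < Module.finrank K F := by
  refine FiniteField.finrank_span_lt_of_trace_mul_eq_zero
    (pow_ne_zero 2 (inv_ne_zero (sub_ne_zero.mpr hx))) ?_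
  rintro _ ⟨i, rfl⟩
  exact trace_mul_eval_constructionIPoly hK hx (b i)

end ConstructionI

/-- Theorem 3. Let `n = 2^t` and `k ≤ n - 2`, and let `g₁, …, g_t` be
chosen according to Construction I. Then (i) the traces `Tr(gᵢ(α) f(α))`,
`α ∈ F \ {α*}`, `i ∈ [t]`, determine the codeword symbol `f(α*)` of the full-length
Reed–Solomon code `RS(F, k)`, and (ii) the repair bandwidth is at most `(n-1)(t-1)` bits:
`Σ_{α ∈ F \ {α*}} rank₂ {g₁(α), …, g_t(α)} ≤ (n-1)(t-1)`. -/
theorem constructionI_repair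
    (t k n : ℕ) (B F : Type*) [Field B] [Fintype B] [Field F] [Fintype F]
    [Algebra B F]
    (hB : Fintype.card B = 2) (ht : Module.finrank B F = t)
    (hn : n = 2 ^ t) (hk : k ≤ n - 2)
    (αstar : F) (β : Module.Basis (Fin t) B F)
    (g : Fin t → F[X])
    (hg : ∀ i, g i = C (β i) * (X - C (αstar - β i))) :
    (∀ f f' : F[X], f.degree < (k : WithBot ℕ) → f'.degree < (k : WithBot ℕ) →
      (∀ α : F, α ≠ αstar → ∀ i : Fin t,
        Algebra.trace B F ((g i).eval α * f.eval α)
          = Algebra.trace B F ((g i).eval α * f'.eval α)) →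
      f.eval αstar = f'.eval αstar) ∧
    ∑ α ∈ Finset.univ.erase αstar,
        Module.finrank B (Submodule.span B (Set.range fun i => (g i).eval α))
      ≤ (n - 1) * (t - 1) := by
  obtain rfl : g = fun i => constructionIPoly αstar (β i) := funext hg
  have hcard : Fintype.card F = n := by rw [Module.card_eq_pow_finrank (K := B), hB, ht, hn]
  refine ⟨fun f f' hf hf' htr => ?_, ?_⟩
  · rw [← sub_eq_zero, ← eval_sub]
    refine FiniteField.eval_eq_zero_of_trace_eval_mul_eq_zero _
      (span_eval_constructionIPoly_self hB β αstar) (fun i => ?_) fun x hx i => ?_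
    · calc _ ≤ (constructionIPoly αstar (β i)).degree + (f - f').degree := degree_mul_le _ _
        _ ≤ 1 + (f - f').degree := add_le_add_left (degree_constructionIPoly_le _ _) _
        _ < 1 + k := WithBot.add_lt_add_left WithBot.one_ne_bot
          ((degree_sub_le f f').trans_lt (max_lt hf hf'))
        _ ≤ ↑(Fintype.card F - 1) := by
          have := Fintype.one_lt_card (α := F)
          exact_mod_cast (by omega : 1 + k ≤ Fintype.card F - 1)
    · rw [eval_sub, mul_sub, map_sub, htr x hx i, sub_self]
  · calc _ ≤ ∑ _ ∈ Finset.univ.erase αstar, (t - 1) :=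
          Finset.sum_le_sum fun x hx => Nat.le_sub_one_of_lt <|
            (finrank_span_eval_constructionIPoly_lt hB _ (Finset.ne_of_mem_erase hx)).trans_eq ht
      _ = (n - 1) * (t - 1) := by simp [Finset.card_erase_of_mem, hcard]
end

section
/- With g_1,…,g_t chosen according to Construction II, one has g_i(α*) = M·β_i^{q^s} for every i ∈ {1,…,t}, and the set {g_1(α*),…,g_t(α*)} has rank t over B = GF(q), for every 1 ≤ s < t. -/
open Polynomial
open scoped Classical

/-! At `α*` each linear factor of `gᵢ` evaluates to `w⁻¹ βᵢ`, so `gᵢ(α*) = M βᵢ^{q^s}`.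
The map `x ↦ M x^{q^s}` is `M` times the `s`-th power of the `B`-linear Frobenius of `F`, hence
an injective `B`-linear map, and it carries the basis `β` to a linearly independent family. -/

theorem Submodule.card_filter_mem_ne_zero {K V : Type*} [Field K] [Fintype K] [AddCommGroup V]
    [Module K V] [Fintype V] (W : Submodule K V) :
    (Finset.univ.filter fun v : V => v ∈ W ∧ v ≠ 0).card =
      Fintype.card K ^ Module.finrank K W - 1 := by
  have hcard : (Finset.univ.filter fun v : V => v ∈ W).card =
      Fintype.card K ^ Module.finrank K W := by
    rw [← Module.card_eq_pow_finrank (V := W), Fintype.card_subtype]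
  rw [← hcard, ← Finset.filter_filter, Finset.filter_ne', Finset.card_erase_of_mem (by simp)]

theorem Polynomial.eval_C_mul_prod_X_sub_C_sub_inv_mul {F : Type*} [Field F] (S : Finset F)
    (a c : F) :
    (C c * ∏ w ∈ S, (X - C (a - w⁻¹ * c))).eval a = (∏ w ∈ S, w⁻¹) * c ^ (S.card + 1) := by
  simp only [eval_mul, eval_C, eval_prod, eval_sub, eval_X, sub_sub_cancel,
    Finset.prod_mul_distrib, Finset.prod_const]
  ring

theorem LinearIndependent.mul_pow_card_pow {K L ι : Type*} [Field K] [Fintype K] [Field L]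
    [Algebra K L] {v : ι → L} (hv : LinearIndependent K v) {c : L} (hc : c ≠ 0) (n : ℕ) :
    LinearIndependent K fun i => c * v i ^ (Fintype.card K ^ n) := by
  let φ := FiniteField.frobeniusAlgHom K L ^ n
  have hφ : ∀ x, φ x = x ^ (Fintype.card K ^ n) := fun x => by
    simp [φ, AlgHom.coe_pow, FiniteField.coe_frobeniusAlgHom, pow_iterate]
  let f : L →ₗ[K] L := c • φ.toLinearMap
  have hinj : Function.Injective f := fun x y hxy =>
    φ.toRingHom.injective (mul_left_cancel₀ hc hxy)
  simpa [f, Function.comp_def, hφ] using hv.map' f (LinearMap.ker_eq_bot.mpr hinj)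

theorem constructionII_rank_at_erased_general
    (q t s : ℕ) (B F : Type*) [Field B] [Fintype B] [Field F] [Fintype F]
    [Algebra B F]
    (hq : Fintype.card B = q)
    (αstar : F) (β : Module.Basis (Fin t) B F)
    (W : Submodule B F) (hW : Module.finrank B W = s)
    (g : Fin t → F[X])
    (hg : ∀ i, g i = C (β i) *
      ∏ w ∈ Finset.univ.filter (fun w : F => w ∈ W ∧ w ≠ 0),
        (X - C (αstar - w⁻¹ * β i)))
    (M : F)
    (hM : M = ∏ w ∈ Finset.univ.filter (fun w : F => w ∈ W ∧ w ≠ 0), w⁻¹) :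
    (∀ i, (g i).eval αstar = M * (β i) ^ (q ^ s)) ∧
    Module.finrank B
      (Submodule.span B (Set.range fun i => (g i).eval αstar)) = t := by
  have heval : ∀ i, (g i).eval αstar = M * β i ^ (q ^ s) := fun i => by
    rw [hg i, eval_C_mul_prod_X_sub_C_sub_inv_mul, ← hM, W.card_filter_mem_ne_zero, hq, hW,
      Nat.sub_add_cancel (Nat.one_le_pow _ _ (hq ▸ Fintype.card_pos))]
  refine ⟨heval, ?_⟩
  have hM0 : M ≠ 0 := hM ▸ Finset.prod_ne_zero_iff.mpr fun w hw =>
    inv_ne_zero (Finset.mem_filter.mp hw).2.2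
  rw [funext heval, ← hq, finrank_span_eq_card (β.linearIndependent.mul_pow_card_pow hM0 s),
    Fintype.card_fin]

/-- Lemma 4. With `g₁, …, g_t` chosen according to Construction II
(`gᵢ(x) = βᵢ ∏_{j=1}^{q^s-1} (x - (α* - wⱼ⁻¹ βᵢ))`, where `w₁, …, w_{q^s-1}` are the
nonzero elements of an `s`-dimensional `B`-subspace `W` of `F` and `β₁, …, β_t` is a
`B`-basis of `F`), one has `gᵢ(α*) = M βᵢ^{q^s}` for `M = ∏ⱼ wⱼ⁻¹`, and the set
`{g₁(α*), …, g_t(α*)}` has rank `t` over `B = GF(q)`, for every `1 ≤ s < t`. -/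
theorem constructionII_rank_at_erased
    (q t s : ℕ) (B F : Type*) [Field B] [Fintype B] [Field F] [Fintype F]
    [Algebra B F]
    (hq : Fintype.card B = q) (ht : Module.finrank B F = t)
    (hs1 : 1 ≤ s) (hst : s < t)
    (αstar : F) (β : Module.Basis (Fin t) B F)
    (W : Submodule B F) (hW : Module.finrank B W = s)
    (g : Fin t → F[X])
    (hg : ∀ i, g i = C (β i) *
      ∏ w ∈ Finset.univ.filter (fun w : F => w ∈ W ∧ w ≠ 0),
        (X - C (αstar - w⁻¹ * β i)))
    (M : F)
    (hM : M = ∏ w ∈ Finset.univ.filter (fun w : F => w ∈ W ∧ w ≠ 0), w⁻¹) :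
    (∀ i, (g i).eval αstar = M * (β i) ^ (q ^ s)) ∧
    Module.finrank B
      (Submodule.span B (Set.range fun i => (g i).eval αstar)) = t :=
  constructionII_rank_at_erased_general q t s B F hq αstar β W hW g hg M hM
end

section
/- With g_1,…,g_t chosen according to Construction II, for every α ∈ F∖{α*} the set {g_1(α),…,g_t(α)} has rank at most t − s over B = GF(q), for every 1 ≤ s < t. -/
open Polynomial
open scoped Classical

/-!
Put `a = α* - α ≠ 0`. Each factor of `gᵢ(α)` is `w⁻¹βᵢ - a = a w⁻¹ (a⁻¹βᵢ - w)`, so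
`gᵢ(α) = κ · L_W(a⁻¹βᵢ)` with `κ` independent of `i`, where `L_W(x) = ∏_{w ∈ W} (x - w)` is the
subspace polynomial of `W`. The map `L_W` is `B`-linear: adjoining `u ∉ V` to a subspace gives
`L_{Bu ⊕ V}(x) = ∏_{c ∈ B} (L_V x - c L_V u) = K^q ((K⁻¹ L_V x)^q - K⁻¹ L_V x)`
with `K = L_V u ≠ 0`.
Its kernel is `W`, so all `gᵢ(α)` lie in a `B`-subspace of dimension `t - s`.
-/

section Frobenius

variable {B F : Type*} [Field B] [Fintype B] [Field F] [Algebra B F]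

theorem prod_univ_X_sub_C : ∏ c : B, (X - C c) = (X ^ Fintype.card B - X : B[X]) := by
  have hcard : 1 < Fintype.card B := Fintype.one_lt_card
  have hmonic : (X ^ Fintype.card B - X : B[X]).Monic :=
    monic_X_pow_sub (by rw [degree_X]; exact_mod_cast hcard)
  have h := prod_multiset_X_sub_C_of_monic_of_roots_card_eq hmonic (by
    rw [FiniteField.roots_X_pow_card_sub_X, FiniteField.X_pow_card_sub_X_natDegree_eq B hcard]
    rfl)
  rwa [FiniteField.roots_X_pow_card_sub_X] at h

theorem prod_univ_sub_algebraMap (z : F) :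
    ∏ c : B, (z - algebraMap B F c) = z ^ Fintype.card B - z := by
  simpa using congrArg (aeval z) (prod_univ_X_sub_C (B := B))

noncomputable def frobeniusSubId : F →ₗ[B] F :=
  (FiniteField.frobeniusAlgHom B F).toLinearMap - LinearMap.id

theorem frobeniusSubId_apply (z : F) :
    frobeniusSubId (B := B) z = ∏ c : B, (z - algebraMap B F c) := by
  rw [prod_univ_sub_algebraMap]; rfl

theorem prod_univ_sub_smul {K : F} (hK : K ≠ 0) (y : F) :
    ∏ c : B, (y - c • K) = K ^ Fintype.card B * frobeniusSubId (B := B) (K⁻¹ * y) := by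
  rw [frobeniusSubId_apply, ← Finset.card_univ, ← Finset.prod_const, ← Finset.prod_mul_distrib]
  refine Finset.prod_congr rfl fun c _ => ?_
  rw [Algebra.smul_def]
  field_simp

end Frobenius

section SubspacePolynomial

variable {B F : Type*} [Field B] [Field F] [Algebra B F] [Fintype F]

noncomputable def subspacePoly (V : Submodule B F) (x : F) : F :=
  ∏ v : V, (x - v)

theorem subspacePoly_eq_zero_iff {V : Submodule B F} {x : F} : subspacePoly V x = 0 ↔ x ∈ V := by
  simp [subspacePoly, Finset.prod_eq_zero_iff, sub_eq_zero]

variable [Fintype B]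

theorem subspacePoly_span_singleton_sup {V : Submodule B F} {u : F} (hu : u ∉ V) (x : F) :
    subspacePoly ((B ∙ u) ⊔ V) x = ∏ c : B, subspacePoly V (x - c • u) := by
  let e : B × V → ↥((B ∙ u) ⊔ V) := fun p =>
    ⟨p.1 • u + p.2,
      Submodule.add_mem_sup (Submodule.smul_mem _ _ (Submodule.mem_span_singleton_self u)) p.2.2⟩
  have he : e.Bijective := by
    constructor
    · rintro ⟨c, v⟩ ⟨d, w⟩ h
      have h' : c • u + (v : F) = d • u + w := congrArg Subtype.val h
      obtain rfl : c = d := by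
        by_contra hcd
        refine hu ?_
        have : (c - d) • u = w - v := by rw [sub_smul]; linear_combination h'
        rw [← inv_smul_smul₀ (sub_ne_zero.mpr hcd) u, this]
        exact V.smul_mem _ (V.sub_mem w.2 v.2)
      simpa using h'
    · rintro ⟨y, hy⟩
      obtain ⟨z, hz, v, hv, rfl⟩ := Submodule.mem_sup.mp hy
      obtain ⟨c, rfl⟩ := Submodule.mem_span_singleton.mp hz
      exact ⟨(c, ⟨v, hv⟩), rfl⟩
  simp only [subspacePoly, ← Fintype.prod_prod_type']
  refine (Fintype.prod_bijective e he _ _ fun p => ?_).symm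
  simp only [e]; ring

theorem isLinearMap_subspacePoly_span_singleton_sup {V : Submodule B F}
    (hV : IsLinearMap B (subspacePoly V)) {u : F} (hu : u ∉ V) :
    IsLinearMap B (subspacePoly ((B ∙ u) ⊔ V)) := by
  let L := IsLinearMap.mk' _ hV
  have hK : L u ≠ 0 := mt subspacePoly_eq_zero_iff.mp hu
  have h : subspacePoly ((B ∙ u) ⊔ V) = LinearMap.mulLeft B (L u ^ Fintype.card B) ∘ₗ
      frobeniusSubId ∘ₗ LinearMap.mulLeft B (L u)⁻¹ ∘ₗ L := by
    ext x
    have hL : ∀ c : B, subspacePoly V (x - c • u) = L x - c • L u := fun c =>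
      (L.map_sub x (c • u)).trans (by rw [L.map_smul])
    simp_rw [subspacePoly_span_singleton_sup hu, hL, prod_univ_sub_smul hK]
    rfl
  rw [h]
  exact LinearMap.isLinear _

theorem isLinearMap_subspacePoly (V : Submodule B F) : IsLinearMap B (subspacePoly V) := by
  suffices h : ∀ s : Finset F, IsLinearMap B (subspacePoly (Submodule.span B (s : Set F))) by
    simpa using h (V : Set F).toFinset
  intro s
  induction s using Finset.induction_on with
  | empty =>
    have h0 : subspacePoly (⊥ : Submodule B F) = (LinearMap.id : F →ₗ[B] F) := by
      ext x; simp [subspacePoly]; rfl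
    rw [Finset.coe_empty, Submodule.span_empty, h0]
    exact LinearMap.isLinear _
  | insert u s _ ih =>
    rw [Finset.coe_insert]
    by_cases hu : u ∈ Submodule.span B (s : Set F)
    · rwa [Submodule.span_insert_eq_span hu]
    · rw [Submodule.span_insert]
      exact isLinearMap_subspacePoly_span_singleton_sup ih hu

noncomputable def subspacePolyLinearMap (V : Submodule B F) : F →ₗ[B] F :=
  IsLinearMap.mk' _ (isLinearMap_subspacePoly V)

theorem ker_subspacePolyLinearMap (V : Submodule B F) :
    LinearMap.ker (subspacePolyLinearMap V) = V := by
  ext x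
  exact subspacePoly_eq_zero_iff

theorem finrank_range_subspacePolyLinearMap (V : Submodule B F) :
    Module.finrank B (LinearMap.range (subspacePolyLinearMap V)) =
      Module.finrank B F - Module.finrank B V := by
  have h := LinearMap.finrank_range_add_finrank_ker (subspacePolyLinearMap V)
  rw [ker_subspacePolyLinearMap] at h
  omega

end SubspacePolynomial

section ConstructionII

variable {B F : Type*} [Field B] [Field F] [Algebra B F] [Fintype F]

theorem subspacePoly_eq_mul_prod (W : Submodule B F) (y : F) :
    subspacePoly W y = y * ∏ w ∈ Finset.univ.filter (fun w : F => w ∈ W ∧ w ≠ 0), (y - w) := by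
  have hsplit : Finset.univ.filter (fun w : F => w ∈ W ∧ w ≠ 0) =
      (Finset.univ.filter (· ∈ W)).erase 0 := by
    ext w; simp [and_comm]
  rw [subspacePoly, ← Finset.prod_subtype (Finset.univ.filter (· ∈ W)) (by simp), hsplit,
    ← Finset.mul_prod_erase _ (y - ·) (by simp : (0 : F) ∈ Finset.univ.filter (· ∈ W)), sub_zero]

theorem mul_prod_inv_mul_sub (W : Submodule B F) {a : F} (ha : a ≠ 0) (b : F) :
    b * ∏ w ∈ Finset.univ.filter (fun w : F => w ∈ W ∧ w ≠ 0), (w⁻¹ * b - a) =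
      a * (∏ w ∈ Finset.univ.filter (fun w : F => w ∈ W ∧ w ≠ 0), (a * w⁻¹)) *
        subspacePoly W (a⁻¹ * b) := by
  obtain ⟨y, rfl⟩ : ∃ y, b = a * y := ⟨a⁻¹ * b, (mul_inv_cancel_left₀ ha b).symm⟩
  have h : ∀ w ∈ Finset.univ.filter (fun w : F => w ∈ W ∧ w ≠ 0),
      w⁻¹ * (a * y) - a = a * w⁻¹ * (y - w) := fun w hw => by
    have hw0 : w ≠ 0 := (Finset.mem_filter.mp hw).2.2
    field_simp
  rw [Finset.prod_congr rfl h, Finset.prod_mul_distrib, inv_mul_cancel_left₀ ha,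
    subspacePoly_eq_mul_prod]
  ring

end ConstructionII

theorem constructionII_rank_at_available_general
    (t s : ℕ) (B F : Type*) [Field B] [Fintype B] [Field F] [Fintype F]
    [Algebra B F]
    (ht : Module.finrank B F = t)
    (αstar : F) (β : Module.Basis (Fin t) B F)
    (W : Submodule B F) (hW : Module.finrank B W = s)
    (g : Fin t → F[X])
    (hg : ∀ i, g i = C (β i) *
      ∏ w ∈ Finset.univ.filter (fun w : F => w ∈ W ∧ w ≠ 0),
        (X - C (αstar - w⁻¹ * β i)))
    (α : F) (hα : α ≠ αstar) :
    Module.finrank B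
      (Submodule.span B (Set.range fun i => (g i).eval α)) ≤ t - s := by
  set a := αstar - α
  have ha : a ≠ 0 := sub_ne_zero.mpr hα.symm
  set κ := a * ∏ w ∈ Finset.univ.filter (fun w : F => w ∈ W ∧ w ≠ 0), (a * w⁻¹)
  have hval : ∀ i, (g i).eval α = κ * subspacePolyLinearMap W (a⁻¹ * β i) := fun i => by
    have h : ∀ w : F, α - (αstar - w⁻¹ * β i) = w⁻¹ * β i - a := fun w => by ring
    simp only [hg, eval_mul, eval_C, eval_prod, eval_sub, eval_X, h]
    exact mul_prod_inv_mul_sub W ha (β i)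
  have hspan : Submodule.span B (Set.range fun i => (g i).eval α) ≤
      (LinearMap.range (subspacePolyLinearMap W)).map (LinearMap.mulLeft B κ) := by
    rw [Submodule.span_le]
    refine Set.range_subset_iff.mpr fun i => ?_
    rw [SetLike.mem_coe, hval]
    exact Submodule.mem_map_of_mem (LinearMap.mem_range_self _ _)
  calc Module.finrank B (Submodule.span B (Set.range fun i => (g i).eval α))
      ≤ Module.finrank B (LinearMap.range (subspacePolyLinearMap W)) :=
        (Submodule.finrank_mono hspan).trans (Submodule.finrank_map_le _ _)
    _ = t - s := by rw [finrank_range_subspacePolyLinearMap, ht, hW]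

/-- Lemma 6. With `g₁, …, g_t` chosen according to Construction II
(`gᵢ(x) = βᵢ ∏_{j=1}^{q^s-1} (x - (α* - wⱼ⁻¹ βᵢ))`, where `w₁, …, w_{q^s-1}` are the
nonzero elements of an `s`-dimensional `B`-subspace `W` of `F` and `β₁, …, β_t` is a
`B`-basis of `F`), for every `α ∈ F \ {α*}` the set `{g₁(α), …, g_t(α)}` has rank at
most `t - s` over `B = GF(q)`, for every `1 ≤ s < t`. -/
theorem constructionII_rank_at_available
    (q t s : ℕ) (B F : Type*) [Field B] [Fintype B] [Field F] [Fintype F]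
    [Algebra B F]
    (hq : Fintype.card B = q) (ht : Module.finrank B F = t)
    (hs1 : 1 ≤ s) (hst : s < t)
    (αstar : F) (β : Module.Basis (Fin t) B F)
    (W : Submodule B F) (hW : Module.finrank B W = s)
    (g : Fin t → F[X])
    (hg : ∀ i, g i = C (β i) *
      ∏ w ∈ Finset.univ.filter (fun w : F => w ∈ W ∧ w ≠ 0),
        (X - C (αstar - w⁻¹ * β i)))
    (α : F) (hα : α ≠ αstar) :
    Module.finrank B
      (Submodule.span B (Set.range fun i => (g i).eval α)) ≤ t - s :=
  constructionII_rank_at_available_general t s B F ht αstar β W hW g hg α hα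
end

section
/- With g_1,…,g_t chosen according to Construction III, one has g_i(α*) = τ·u_i for every i ∈ {1,…,t}, where τ = ∏_{w ∈ W∖{0}} (−w) ≠ 0, and consequently the set {g_1(α*),…,g_t(α*)} has rank t over B = GF(q), for every 1 ≤ s < t. -/
open Polynomial
open scoped Classical

/-!
Since `0 ∈ W`, the factor `w = 0` of `L_W(uᵢ(x - α*))` is `uᵢ(x - α*)`, so the quotient by
`x - α*` is `uᵢ ∏_{w ∈ W ∖ {0}} (uᵢ(x - α*) - w)`, whose value at `α*` is `τ uᵢ`.
Multiplication by `τ ≠ 0` is an injective `B`-linear map of `F`, so the `τ uᵢ` stay linearly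
independent and span a space of dimension `t`.
-/

namespace Polynomial

variable {R : Type*} [CommRing R]

theorem prod_C_mul_X_sub_C_sub_C_eq_X_sub_C_mul {S : Finset R} (hS : (0 : R) ∈ S) (a c : R) :
    ∏ w ∈ S, (C c * (X - C a) - C w) =
      (X - C a) * (C c * ∏ w ∈ S.erase 0, (C c * (X - C a) - C w)) := by
  rw [← Finset.mul_prod_erase _ _ hS, C_0, sub_zero]
  ring

theorem eval_prod_C_mul_X_sub_C_sub_C_divByMonic_X_sub_C {S : Finset R} (hS : (0 : R) ∈ S)
    (a c : R) :
    ((∏ w ∈ S, (C c * (X - C a) - C w)) /ₘ (X - C a)).eval a =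
      c * ∏ w ∈ S.erase 0, (-w) := by
  rw [prod_C_mul_X_sub_C_sub_C_eq_X_sub_C_mul hS,
    mul_divByMonic_cancel_left _ (monic_X_sub_C a)]
  simp only [eval_mul, eval_C, eval_prod, eval_sub, eval_X, sub_self, mul_zero, zero_sub]

end Polynomial

theorem LinearIndependent.mul_left {ι R A : Type*} [CommRing R] [Ring A] [NoZeroDivisors A]
    [Algebra R A] {v : ι → A} (hv : LinearIndependent R v) {τ : A} (hτ : τ ≠ 0) :
    LinearIndependent R fun i => τ * v i :=
  hv.map' (LinearMap.mulLeft R τ) (LinearMap.ker_eq_bot.2 (mul_right_injective₀ hτ))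

theorem constructionIII_rank_at_erased_general
    (t : ℕ) (B F : Type*) [Field B] [Field F] [Fintype F]
    [Algebra B F]
    (αstar : F) (u : Module.Basis (Fin t) B F)
    (W : Submodule B F)
    (g : Fin t → F[X])
    (hg : ∀ i, g i =
      (∏ w ∈ Finset.univ.filter (fun w : F => w ∈ W),
        (C (u i) * (X - C αstar) - C w)) /ₘ (X - C αstar))
    (τ : F)
    (hτ : τ = ∏ w ∈ Finset.univ.filter (fun w : F => w ∈ W ∧ w ≠ 0), (-w)) :
    τ ≠ 0 ∧
    (∀ i, (g i).eval αstar = τ * u i) ∧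
    Module.finrank B
      (Submodule.span B (Set.range fun i => (g i).eval αstar)) = t := by
  have hτ0 : τ ≠ 0 := by
    rw [hτ, Finset.prod_ne_zero_iff]
    intro w hw
    exact neg_ne_zero.2 (Finset.mem_filter.1 hw).2.2
  have hW0 : (0 : F) ∈ Finset.univ.filter (fun w : F => w ∈ W) := by simp
  have heval : ∀ i, (g i).eval αstar = τ * u i := by
    intro i
    rw [hg i, eval_prod_C_mul_X_sub_C_sub_C_divByMonic_X_sub_C hW0, hτ, ← Finset.filter_ne',
      Finset.filter_filter, mul_comm]
  refine ⟨hτ0, heval, ?_⟩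
  rw [funext heval, finrank_span_eq_card (u.linearIndependent.mul_left hτ0), Fintype.card_fin]

/-- Lemma 7. With `g₁, …, g_t` chosen according to Construction III
(`gᵢ(x) = L_W(uᵢ(x - α*))/(x - α*)` where `L_W(x) = ∏_{w ∈ W} (x - w)` for an
`s`-dimensional `B`-subspace `W` of `F` and a `B`-basis `u₁, …, u_t` of `F`), one has
`gᵢ(α*) = τ uᵢ` for every `i`, where `τ = ∏_{w ∈ W \ {0}} (-w) ≠ 0`, and consequently
the set `{g₁(α*), …, g_t(α*)}` has rank `t` over `B = GF(q)`, for every `1 ≤ s < t`. -/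
theorem constructionIII_rank_at_erased
    (q t s : ℕ) (B F : Type*) [Field B] [Fintype B] [Field F] [Fintype F]
    [Algebra B F]
    (hq : Fintype.card B = q) (ht : Module.finrank B F = t)
    (hs1 : 1 ≤ s) (hst : s < t)
    (αstar : F) (u : Module.Basis (Fin t) B F)
    (W : Submodule B F) (hW : Module.finrank B W = s)
    (g : Fin t → F[X])
    (hg : ∀ i, g i =
      (∏ w ∈ Finset.univ.filter (fun w : F => w ∈ W),
        (C (u i) * (X - C αstar) - C w)) /ₘ (X - C αstar))
    (τ : F)
    (hτ : τ = ∏ w ∈ Finset.univ.filter (fun w : F => w ∈ W ∧ w ≠ 0), (-w)) :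
    τ ≠ 0 ∧
    (∀ i, (g i).eval αstar = τ * u i) ∧
    Module.finrank B
      (Submodule.span B (Set.range fun i => (g i).eval αstar)) = t :=
  constructionIII_rank_at_erased_general t B F αstar u W g hg τ hτ
end
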